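/- arXiv:1009.1263 — 2 statements merged into one kernel-verified Lean document; each statement's English description precedes it below -/
import Mathlib

section
/- Suppose u : [0,T) → H^s solves the second-order integral equation u(t) = φ + tψ + ∫₀ᵗ (t−τ) L f(u(τ)) dτ in H^s, where L is a bounded linear operator on H^s with ‖L‖ ≤ C and ‖f(u)‖_s ≤ A‖u‖_s whenever ‖u‖_∞ ≤ M, and suppose ‖u(t)‖_∞ ≤ M on [0,T). Then for all t ∈ [0,T), ‖u(t)‖_s + ‖u_t(t)‖_s ≤ [‖φ‖_s + (T+1)‖ψ‖_s] e^{(T+1)CAT}, and in particular the H^s norm of (u,u_t) remains bounded up to time T. -/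
open Set intervalIntegral
open MeasureTheory (volume)

/-!
Bounding the kernel `t - τ` by `T`, both `u` and `u_t` are controlled by `∫₀ᵗ ‖u‖`:
`‖u(t)‖ + ‖u_t(t)‖ ≤ B + (T+1)CA ∫₀ᵗ ‖u‖` with `B = ‖φ‖ + (T+1)‖ψ‖`. Since `‖u‖` alone
also lies below the right-hand side, the integral form of Grönwall's inequality bounds that
right-hand side by `B e^{(T+1)CA t}`.
-/

theorem add_mul_integral_le_mul_exp_of_le_add_mul_integral {w : ℝ → ℝ} {B K a b : ℝ}
    (hK : 0 ≤ K) (hw : ContinuousOn w (Icc a b))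
    (h : ∀ t ∈ Icc a b, w t ≤ B + K * ∫ s in a..t, w s) :
    ∀ t ∈ Icc a b, B + K * ∫ s in a..t, w s ≤ B * Real.exp (K * (t - a)) := by
  intro t ht
  have hab : a ≤ b := ht.1.trans ht.2
  have hR : ContinuousOn (fun t => B + K * ∫ s in a..t, w s) (Icc a b) := by
    have := continuousOn_primitive_interval'
      (hw.intervalIntegrable_of_Icc (μ := volume) hab) left_mem_uIcc
    rw [uIcc_of_le hab] at this
    exact continuousOn_const.add (continuousOn_const.mul this)
  have hR' : ∀ x ∈ Ico a b,
      HasDerivWithinAt (fun t => B + K * ∫ s in a..t, w s) (K * w x) (Ici x) x := by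
    intro x hx
    have hnhds : Icc a b ∈ nhdsWithin x (Ioi x) := Icc_mem_nhdsGT_of_mem hx
    refine ((integral_hasDerivWithinAt_right ?_ ?_ ?_).const_mul K).const_add B
    · exact (hw.mono (Icc_subset_Icc le_rfl hx.2.le)).intervalIntegrable_of_Icc hx.1
    · exact (hw.stronglyMeasurableAtFilter_nhdsWithin measurableSet_Icc x).filter_mono
        (nhdsWithin_le_of_mem hnhds)
    · exact (hw x (Ico_subset_Icc_self hx)).mono_of_mem_nhdsWithin hnhds
  have := le_gronwallBound_of_liminf_deriv_right_le (δ := B) (K := K) (ε := 0) hR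
    (fun x hx _ hr => (hR' x hx).liminf_right_slope_le hr) (by simp)
    (fun x hx => by
      rw [add_zero]; exact mul_le_mul_of_nonneg_left (h x (Ico_subset_Icc_self hx)) hK)
    t ht
  rw [gronwallBound_ε0] at this
  exact this

section Duhamel

variable {X : Type*} [NormedAddCommGroup X] [NormedSpace ℝ X]

theorem norm_integral_sub_smul_le {g : ℝ → X} {k : ℝ → ℝ} {a t : ℝ} (hat : a ≤ t)
    (hg : ∀ τ ∈ Ioc a t, ‖g τ‖ ≤ k τ) (hk : IntervalIntegrable k volume a t) :
    ‖∫ τ in a..t, (t - τ) • g τ‖ ≤ (t - a) * ∫ τ in a..t, k τ := by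
  rw [← integral_const_mul]
  refine norm_integral_le_of_norm_le hat (Filter.Eventually.of_forall fun τ hτ => ?_)
    (hk.const_mul _)
  rw [norm_smul, Real.norm_of_nonneg (sub_nonneg.2 hτ.2)]
  exact mul_le_mul (by linarith [hτ.1]) (hg τ hτ) (norm_nonneg _) (by linarith [hτ.1])

theorem norm_add_norm_le_of_duhamel {F : ℝ → X} {k : ℝ → ℝ} {φ ψ x v : X} {t T : ℝ}
    (ht : 0 ≤ t) (htT : t ≤ T) (hF : ∀ τ ∈ Ioc 0 t, ‖F τ‖ ≤ k τ)
    (hk : IntervalIntegrable k volume 0 t)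
    (hx : x = φ + t • ψ + ∫ τ in (0:ℝ)..t, (t - τ) • F τ)
    (hv : v = ψ + ∫ τ in (0:ℝ)..t, F τ) :
    ‖x‖ + ‖v‖ ≤ ‖φ‖ + (T + 1) * ‖ψ‖ + (T + 1) * ∫ τ in (0:ℝ)..t, k τ := by
  have hF_int : ‖∫ τ in (0:ℝ)..t, F τ‖ ≤ ∫ τ in (0:ℝ)..t, k τ :=
    norm_integral_le_of_norm_le ht (.of_forall hF) hk
  have hx_le : ‖x‖ ≤ ‖φ‖ + t * ‖ψ‖ + t * ∫ τ in (0:ℝ)..t, k τ := by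
    rw [hx]
    refine norm_add₃_le.trans (add_le_add (add_le_add le_rfl ?_) ?_)
    · rw [norm_smul, Real.norm_of_nonneg ht]
    · simpa using norm_integral_sub_smul_le ht hF hk
  have hv_le : ‖v‖ ≤ ‖ψ‖ + ∫ τ in (0:ℝ)..t, k τ :=
    hv ▸ (norm_add_le _ _).trans (add_le_add le_rfl hF_int)
  nlinarith [norm_nonneg ψ, (norm_nonneg _).trans hF_int]

end Duhamel

theorem duhamel_gronwall_bound_general {X : Type*} [NormedAddCommGroup X] [NormedSpace ℝ X]
    (L : X →L[ℝ] X) (f : X → X) (N : X → ℝ) (C A M T : ℝ)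
    (hA : 0 ≤ A)
    (hL : ‖L‖ ≤ C)
    (hf : ∀ v : X, N v ≤ M → ‖f v‖ ≤ A * ‖v‖)
    (φ ψ : X) (u ut : ℝ → X)
    (hcont : ContinuousOn u (Ico 0 T))
    (hu : ∀ t ∈ Ico (0:ℝ) T, u t = φ + t • ψ + ∫ τ in (0:ℝ)..t, (t - τ) • L (f (u τ)))
    (hut : ∀ t ∈ Ico (0:ℝ) T, ut t = ψ + ∫ τ in (0:ℝ)..t, L (f (u τ)))
    (hN : ∀ t ∈ Ico (0:ℝ) T, N (u t) ≤ M) :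
    ∀ t ∈ Ico (0:ℝ) T,
      ‖u t‖ + ‖ut t‖ ≤ (‖φ‖ + (T + 1) * ‖ψ‖) * Real.exp ((T + 1) * C * A * T) := by
  intro t ht
  have hC : 0 ≤ C := (norm_nonneg L).trans hL
  have hsub : Icc 0 t ⊆ Ico 0 T := Icc_subset_Ico_right ht.2
  have hw : ContinuousOn (fun s => ‖u s‖) (Icc 0 t) := (hcont.mono hsub).norm
  have hforce : ∀ τ ∈ Ico 0 T, ‖L (f (u τ))‖ ≤ C * A * ‖u τ‖ := fun τ hτ =>
    (L.le_opNorm _).trans <| mul_assoc C A _ ▸ mul_le_mul hL (hf _ (hN τ hτ)) (norm_nonneg _) hC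
  have hduhamel : ∀ s ∈ Icc 0 t, ‖u s‖ + ‖ut s‖ ≤
      ‖φ‖ + (T + 1) * ‖ψ‖ + (T + 1) * C * A * ∫ τ in (0:ℝ)..s, ‖u τ‖ := by
    intro s hs
    have hs' : Icc 0 s ⊆ Ico 0 T := (Icc_subset_Icc_right hs.2).trans hsub
    have := norm_add_norm_le_of_duhamel hs.1 (hs.2.trans ht.2.le)
      (fun τ hτ => hforce τ (hs' (Ioc_subset_Icc_self hτ)))
      (((hw.mono (Icc_subset_Icc_right hs.2)).intervalIntegrable_of_Icc hs.1).const_mul (C * A))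
      (hu s (hsub hs)) (hut s (hsub hs))
    rwa [integral_const_mul, ← mul_assoc, ← mul_assoc] at this
  have hT : 0 ≤ T := ht.1.trans ht.2.le
  have hgronwall := add_mul_integral_le_mul_exp_of_le_add_mul_integral (by positivity) hw
    (fun s hs => (le_add_of_nonneg_right (norm_nonneg _)).trans (hduhamel s hs))
    t ⟨ht.1, le_rfl⟩
  calc ‖u t‖ + ‖ut t‖ ≤ _ := hduhamel t ⟨ht.1, le_rfl⟩
    _ ≤ _ := hgronwall
    _ ≤ _ := by rw [sub_zero]; gcongr; exact ht.2.le

/-- Gronwall estimate for the second-order Duhamel integral equation: if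
`u(t) = φ + tψ + ∫₀ᵗ (t−τ) L f(u(τ)) dτ` and `u_t(t) = ψ + ∫₀ᵗ L f(u(τ)) dτ` in a
Banach space `X` (here `X = H^s`), where `‖L‖ ≤ C`, `‖f(v)‖ ≤ A‖v‖` whenever the
auxiliary (sup-)norm `N(v) ≤ M`, and `N(u(t)) ≤ M` on `[0,T)`, then
`‖u(t)‖ + ‖u_t(t)‖ ≤ (‖φ‖ + (T+1)‖ψ‖) e^{(T+1)CAT}` for all `t ∈ [0,T)`. -/
theorem duhamel_gronwall_bound {X : Type*} [NormedAddCommGroup X] [NormedSpace ℝ X]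
    [CompleteSpace X]
    (L : X →L[ℝ] X) (f : X → X) (N : X → ℝ) (C A M T : ℝ)
    (hC : 0 ≤ C) (hA : 0 ≤ A) (hT : 0 < T)
    (hL : ‖L‖ ≤ C)
    (hf : ∀ v : X, N v ≤ M → ‖f v‖ ≤ A * ‖v‖)
    (φ ψ : X) (u ut : ℝ → X)
    (hcont : ContinuousOn u (Ico 0 T))
    (hint : ∀ t ∈ Ico (0:ℝ) T, IntervalIntegrable (fun τ => L (f (u τ))) MeasureTheory.volume 0 t)
    (hu : ∀ t ∈ Ico (0:ℝ) T, u t = φ + t • ψ + ∫ τ in (0:ℝ)..t, (t - τ) • L (f (u τ)))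
    (hut : ∀ t ∈ Ico (0:ℝ) T, ut t = ψ + ∫ τ in (0:ℝ)..t, L (f (u τ)))
    (hN : ∀ t ∈ Ico (0:ℝ) T, N (u t) ≤ M) :
    ∀ t ∈ Ico (0:ℝ) T,
      ‖u t‖ + ‖ut t‖ ≤ (‖φ‖ + (T + 1) * ‖ψ‖) * Real.exp ((T + 1) * C * A * T) :=
  duhamel_gronwall_bound_general L f N C A M T hA hL hf φ ψ u ut hcont hu hut hN
end

section
/- Under the hypotheses of the energy conservation (E(t) = E(0) for all t), suppose additionally there exists ν > 0 such that a·f₁(a,b) + b·f₂(a,b) ≤ 2(1+2ν)F(a,b) for all (a,b) ∈ ℝ², and E(0) < 0, where E(0) = ‖P₁ψ₁‖² + ‖P₂ψ₂‖² + 2∫F(φ₁,φ₂)dx. Then with Φ(t) = ‖P₁u₁(t)‖² + ‖P₂u₂(t)‖² + b(t+t₀)², for b = −E(0) > 0 and t₀ large enough that Φ'(0) > 0, the function Φ satisfies Φ''Φ − (1+ν)(Φ')² ≥ 0, and hence the solution cannot be global: it blows up in finite time. -/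
/-!
Levine's concavity method. Cauchy–Schwarz gives `(Φ')² ≤ 4 Φ (m₁ + m₂ + b)`, while the growth
condition and conservation of energy give `Φ'' ≥ 4 (1 + ν) (m₁ + m₂ + b)`; together
`Φ Φ'' ≥ (1 + ν) (Φ')²`. Hence `Φ` is increasing and positive, and `Φ ^ (-ν)` is positive and
concave with negative slope at `0`, so it stays below its tangent line there, which reaches zero
in finite time.
-/

open MeasureTheory Set

lemma add_add_sq_le_mul_of_sq_le_mul {r₁ r₂ r₃ f₁ f₂ f₃ g₁ g₂ g₃ : ℝ}
    (hf₁ : 0 ≤ f₁) (hf₂ : 0 ≤ f₂) (hf₃ : 0 ≤ f₃) (hg₁ : 0 ≤ g₁) (hg₂ : 0 ≤ g₂) (hg₃ : 0 ≤ g₃)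
    (h₁ : r₁ ^ 2 ≤ f₁ * g₁) (h₂ : r₂ ^ 2 ≤ f₂ * g₂) (h₃ : r₃ ^ 2 ≤ f₃ * g₃) :
    (r₁ + r₂ + r₃) ^ 2 ≤ (f₁ + f₂ + f₃) * (g₁ + g₂ + g₃) := by
  simpa [Fin.sum_univ_three] using
    Finset.sum_sq_le_sum_mul_sum_of_sq_le_mul Finset.univ (r := ![r₁, r₂, r₃])
      (f := ![f₁, f₂, f₃]) (g := ![g₁, g₂, g₃]) (by simp [Fin.forall_fin_succ, *])
      (by simp [Fin.forall_fin_succ, *]) (by simp [Fin.forall_fin_succ, *])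

lemma sq_two_mul_add_add_mul_le {n₁ n₂ p₁ p₂ m₁ m₂ b τ : ℝ} (hn₁ : 0 ≤ n₁) (hn₂ : 0 ≤ n₂)
    (hm₁ : 0 ≤ m₁) (hm₂ : 0 ≤ m₂) (hb : 0 ≤ b) (h₁ : p₁ ^ 2 ≤ n₁ * m₁) (h₂ : p₂ ^ 2 ≤ n₂ * m₂) :
    (2 * (p₁ + p₂ + b * τ)) ^ 2 ≤ 4 * (m₁ + m₂ + b) * (n₁ + n₂ + b * τ ^ 2) := by
  have := add_add_sq_le_mul_of_sq_le_mul hn₁ hn₂ (by positivity : 0 ≤ b * τ ^ 2) hm₁ hm₂ hb h₁ h₂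
    (le_of_eq (by ring) : (b * τ) ^ 2 ≤ b * τ ^ 2 * b)
  nlinarith

lemma integral_mul_add_mul_le {α : Type*} [MeasurableSpace α] {μ : Measure α} {c : ℝ}
    {F f₁ f₂ : ℝ → ℝ → ℝ} {v₁ v₂ : α → ℝ} (hgrowth : ∀ a b, a * f₁ a b + b * f₂ a b ≤ c * F a b)
    (hF : Integrable (fun x => F (v₁ x) (v₂ x)) μ)
    (hf : Integrable (fun x => v₁ x * f₁ (v₁ x) (v₂ x) + v₂ x * f₂ (v₁ x) (v₂ x)) μ) :
    ∫ x, (v₁ x * f₁ (v₁ x) (v₂ x) + v₂ x * f₂ (v₁ x) (v₂ x)) ∂μ ≤ c * ∫ x, F (v₁ x) (v₂ x) ∂μ := by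
  rw [← integral_const_mul]
  exact integral_mono hf (hF.const_mul c) fun x => hgrowth (v₁ x) (v₂ x)

section HalfLine

variable {f f' : ℝ → ℝ} {a : ℝ}

lemma monotoneOn_Ici_of_hasDerivAt_nonneg (hf : ∀ t ≥ a, HasDerivAt f (f' t) t)
    (hf' : ∀ t ≥ a, 0 ≤ f' t) : MonotoneOn f (Ici a) :=
  monotoneOn_of_hasDerivWithinAt_nonneg (convex_Ici a)
    (fun t ht => (hf t ht).continuousAt.continuousWithinAt)
    (fun t ht => (hf t (interior_subset ht)).hasDerivWithinAt)
    (fun t ht => hf' t (interior_subset ht))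

lemma antitoneOn_Ici_of_hasDerivAt_nonpos (hf : ∀ t ≥ a, HasDerivAt f (f' t) t)
    (hf' : ∀ t ≥ a, f' t ≤ 0) : AntitoneOn f (Ici a) :=
  antitoneOn_of_hasDerivWithinAt_nonpos (convex_Ici a)
    (fun t ht => (hf t ht).continuousAt.continuousWithinAt)
    (fun t ht => (hf t (interior_subset ht)).hasDerivWithinAt)
    (fun t ht => hf' t (interior_subset ht))

lemma false_of_pos_of_hasDerivAt_le_neg {c : ℝ} (hf : ∀ t ≥ a, HasDerivAt f (f' t) t)
    (hpos : ∀ t ≥ a, 0 < f t) (hc : c < 0) (hf' : ∀ t ≥ a, f' t ≤ c) : False := by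
  have hanti : AntitoneOn (fun t => f t - c * t) (Ici a) :=
    antitoneOn_Ici_of_hasDerivAt_nonpos
      (fun t ht => (hf t ht).fun_sub (hasDerivAt_const_mul c))
      (fun t ht => sub_nonpos.2 (hf' t ht))
  set T := a + f a / -c
  have hT : a ≤ T := le_add_of_nonneg_right (div_nonneg (hpos a le_rfl).le (by linarith))
  have hfT : f T - c * T ≤ f a - c * a := hanti self_mem_Ici hT hT
  have hcT : c * (T - a) = - f a := by simp only [T]; field_simp [hc.ne]; ring
  linarith [hpos T hT]

end HalfLine

section Concavity

variable {ν a : ℝ} {Φ Φ' Φ'' : ℝ → ℝ}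

lemma antitoneOn_deriv_rpow_neg (hν : 0 ≤ ν)
    (hΦ : ∀ t ≥ a, HasDerivAt Φ (Φ' t) t) (hΦ' : ∀ t ≥ a, HasDerivAt Φ' (Φ'' t) t)
    (hpos : ∀ t ≥ a, 0 < Φ t) (h : ∀ t ≥ a, (1 + ν) * Φ' t ^ 2 ≤ Φ'' t * Φ t) :
    AntitoneOn (fun t => -ν * Φ' t * Φ t ^ (-ν - 1)) (Ici a) := by
  refine antitoneOn_Ici_of_hasDerivAt_nonpos
    (f' := fun t => -ν * Φ'' t * Φ t ^ (-ν - 1) + -ν * Φ' t * (Φ' t * (-ν - 1) * Φ t ^ (-ν - 1 - 1)))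
    (fun t ht => ?_) (fun t ht => ?_)
  · exact ((hΦ' t ht).const_mul (-ν)).mul ((hΦ t ht).rpow_const (Or.inl (hpos t ht).ne'))
  · have hq : 0 < Φ t ^ (-ν - 1 - 1) := Real.rpow_pos_of_pos (hpos t ht) _
    rw [show -ν - 1 = -ν - 1 - 1 + 1 by ring, Real.rpow_add_one (hpos t ht).ne', add_sub_cancel_right]
    nlinarith [mul_nonneg (mul_nonneg hν hq.le) (sub_nonneg.2 (h t ht))]

theorem false_of_one_add_mul_deriv_sq_le (hν : 0 < ν)
    (hΦ : ∀ t ≥ a, HasDerivAt Φ (Φ' t) t) (hΦ' : ∀ t ≥ a, HasDerivAt Φ' (Φ'' t) t)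
    (hΦa : 0 ≤ Φ a) (hΦ'a : 0 < Φ' a) (hΦ'' : ∀ t ≥ a, 0 ≤ Φ'' t)
    (h : ∀ t ≥ a, (1 + ν) * Φ' t ^ 2 ≤ Φ'' t * Φ t) : False := by
  have hΦ'pos : ∀ t ≥ a, 0 < Φ' t := fun t ht =>
    hΦ'a.trans_le (monotoneOn_Ici_of_hasDerivAt_nonneg hΦ' hΦ'' self_mem_Ici ht ht)
  have hΦa_pos : 0 < Φ a := hΦa.lt_of_ne fun h0 => by
    have := h a le_rfl
    rw [← h0, mul_zero] at this
    nlinarith [mul_pos (by linarith : (0:ℝ) < 1 + ν) (pow_pos hΦ'a 2)]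
  have hpos : ∀ t ≥ a, 0 < Φ t := fun t ht => hΦa_pos.trans_le
    (monotoneOn_Ici_of_hasDerivAt_nonneg hΦ (fun t ht => (hΦ'pos t ht).le) self_mem_Ici ht ht)
  refine false_of_pos_of_hasDerivAt_le_neg (f := fun t => Φ t ^ (-ν))
    (c := -ν * Φ' a * Φ a ^ (-ν - 1))
    (fun t ht => (hΦ t ht).rpow_const (Or.inl (hpos t ht).ne'))
    (fun t ht => Real.rpow_pos_of_pos (hpos t ht) _) ?_
    (fun t ht => ?_)
  · have := Real.rpow_pos_of_pos hΦa_pos (-ν - 1)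
    nlinarith [mul_pos (mul_pos hΦ'a hν) this]
  · have := antitoneOn_deriv_rpow_neg hν.le hΦ hΦ' hpos h self_mem_Ici ht ht
    simp only at this ⊢
    linarith

end Concavity

/-- Here `nᵢ = ‖Pᵢuᵢ‖²`, `pᵢ = ⟨Pᵢuᵢ, Pᵢu_{it}⟩`, `mᵢ = ‖Pᵢu_{it}‖²`, and the first conjunct is
`Φ''Φ − (1+ν)(Φ')² ≥ 0` for `Φ = n₁ + n₂ + b(t+t₀)²`. -/
theorem blow_up_negative_energy_general (ν E₀ b t₀ : ℝ) (hν : 0 < ν)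
    (F f₁ f₂ : ℝ → ℝ → ℝ) (u₁ u₂ : ℝ → ℝ → ℝ)
    (n₁ n₂ p₁ p₂ m₁ m₂ : ℝ → ℝ)
    (hn₁0 : ∀ t ≥ (0:ℝ), 0 ≤ n₁ t) (hn₂0 : ∀ t ≥ (0:ℝ), 0 ≤ n₂ t)
    (hm₁0 : ∀ t ≥ (0:ℝ), 0 ≤ m₁ t) (hm₂0 : ∀ t ≥ (0:ℝ), 0 ≤ m₂ t)
    -- `nᵢ' = 2pᵢ` and `pᵢ' = mᵢ + ⟨Pᵢuᵢ, Pᵢu_{itt}⟩ = mᵢ − ⟨uᵢ, fᵢ(u₁,u₂)⟩`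
    (hn₁ : ∀ t ≥ (0:ℝ), HasDerivAt n₁ (2 * p₁ t) t)
    (hn₂ : ∀ t ≥ (0:ℝ), HasDerivAt n₂ (2 * p₂ t) t)
    (hp₁ : ∀ t ≥ (0:ℝ), HasDerivAt p₁
      (m₁ t - ∫ x : ℝ, u₁ t x * f₁ (u₁ t x) (u₂ t x)) t)
    (hp₂ : ∀ t ≥ (0:ℝ), HasDerivAt p₂
      (m₂ t - ∫ x : ℝ, u₂ t x * f₂ (u₁ t x) (u₂ t x)) t)
    -- Cauchy–Schwarz for the underlying inner products
    (hCS₁ : ∀ t ≥ (0:ℝ), (p₁ t) ^ 2 ≤ n₁ t * m₁ t)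
    (hCS₂ : ∀ t ≥ (0:ℝ), (p₂ t) ^ 2 ≤ n₂ t * m₂ t)
    -- conservation of energy
    (henergy : ∀ t ≥ (0:ℝ),
      m₁ t + m₂ t + 2 * ∫ x : ℝ, F (u₁ t x) (u₂ t x) = E₀)
    -- growth condition on the nonlinearity
    (hgrowth : ∀ a b' : ℝ,
      a * f₁ a b' + b' * f₂ a b' ≤ 2 * (1 + 2 * ν) * F a b')
    (hintF : ∀ t ≥ (0:ℝ), Integrable (fun x : ℝ => F (u₁ t x) (u₂ t x)))
    (hintf₁ : ∀ t ≥ (0:ℝ), Integrable (fun x : ℝ => u₁ t x * f₁ (u₁ t x) (u₂ t x)))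
    (hintf₂ : ∀ t ≥ (0:ℝ), Integrable (fun x : ℝ => u₂ t x * f₂ (u₁ t x) (u₂ t x)))
    -- negative energy, choice of `b` and of `t₀`
    (hE₀ : E₀ < 0) (hb : b = -E₀)
    (hΦ'0 : 0 < p₁ 0 + p₂ 0 + b * t₀) :
    (∀ t ≥ (0:ℝ),
      (2 * (m₁ t + m₂ t) -
          2 * (∫ x : ℝ, (u₁ t x * f₁ (u₁ t x) (u₂ t x) +
                u₂ t x * f₂ (u₁ t x) (u₂ t x))) + 2 * b) *
        (n₁ t + n₂ t + b * (t + t₀) ^ 2) -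
      (1 + ν) * (2 * (p₁ t + p₂ t + b * (t + t₀))) ^ 2 ≥ 0) ∧
    False := by
  have hb0 : 0 < b := by linarith
  set Φ : ℝ → ℝ := fun t => n₁ t + n₂ t + b * (t + t₀) ^ 2
  set Φ' : ℝ → ℝ := fun t => 2 * (p₁ t + p₂ t + b * (t + t₀))
  set Φ'' : ℝ → ℝ := fun t => 2 * (m₁ t + m₂ t) -
    2 * (∫ x : ℝ, (u₁ t x * f₁ (u₁ t x) (u₂ t x) + u₂ t x * f₂ (u₁ t x) (u₂ t x))) + 2 * b
  set M : ℝ → ℝ := fun t => m₁ t + m₂ t + b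
  have hΦ : ∀ t ≥ 0, HasDerivAt Φ (Φ' t) t := fun t ht =>
    (((hn₁ t ht).fun_add (hn₂ t ht)).fun_add
      ((((hasDerivAt_id' t).add_const t₀).pow 2).const_mul b)).congr_deriv (by simp only [Φ']; ring)
  have hΦ' : ∀ t ≥ 0, HasDerivAt Φ' (Φ'' t) t := fun t ht =>
    ((((hp₁ t ht).fun_add (hp₂ t ht)).fun_add (((hasDerivAt_id' t).add_const t₀).const_mul b)).const_mul
      2).congr_deriv (by simp only [Φ'', integral_add (hintf₁ t ht) (hintf₂ t ht)]; ring)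
  have hΦ_nonneg : ∀ t ≥ 0, 0 ≤ Φ t := fun t ht =>
    add_nonneg (add_nonneg (hn₁0 t ht) (hn₂0 t ht)) (by positivity)
  have hM_nonneg : ∀ t ≥ 0, 0 ≤ M t := fun t ht => add_nonneg (add_nonneg (hm₁0 t ht) (hm₂0 t ht)) hb0.le
  have hCS : ∀ t ≥ 0, Φ' t ^ 2 ≤ 4 * M t * Φ t := fun t ht =>
    sq_two_mul_add_add_mul_le (hn₁0 t ht) (hn₂0 t ht) (hm₁0 t ht) (hm₂0 t ht) hb0.le (hCS₁ t ht)
      (hCS₂ t ht)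
  have hΦ''M : ∀ t ≥ 0, 4 * (1 + ν) * M t ≤ Φ'' t := fun t ht => by
    have hI := integral_mul_add_mul_le hgrowth (hintF t ht) ((hintf₁ t ht).add (hintf₂ t ht))
    simp only [Φ'', M]
    linear_combination 2 * hI + (2 + 4 * ν) * henergy t ht + (2 + 4 * ν) * hb
  have key : ∀ t ≥ 0, (1 + ν) * Φ' t ^ 2 ≤ Φ'' t * Φ t := fun t ht => calc
    (1 + ν) * Φ' t ^ 2 ≤ (1 + ν) * (4 * M t * Φ t) := by gcongr; exact hCS t ht
    _ = 4 * (1 + ν) * M t * Φ t := by ring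
    _ ≤ Φ'' t * Φ t := by gcongr; exacts [hΦ_nonneg t ht, hΦ''M t ht]
  exact ⟨fun t ht => sub_nonneg.2 (key t ht),
    false_of_one_add_mul_deriv_sq_le hν hΦ hΦ' (hΦ_nonneg 0 le_rfl) (by simpa [Φ'] using hΦ'0)
      (fun t ht => (mul_nonneg (by positivity) (hM_nonneg t ht)).trans (hΦ''M t ht)) key⟩

/-- Blow-up for negative initial energy. With `nᵢ(t) = ‖Pᵢuᵢ(t)‖²`,
`pᵢ(t) = ⟨Pᵢuᵢ, Pᵢu_{it}⟩`, `mᵢ(t) = ‖Pᵢu_{it}(t)‖²`, the identity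
`⟨Pᵢuᵢ, Pᵢu_{itt}⟩ = −⟨uᵢ, fᵢ(u₁,u₂)⟩`, conserved energy
`m₁ + m₂ + 2∫F(u₁,u₂) = E₀ < 0`, the growth condition
`a·f₁(a,b) + b·f₂(a,b) ≤ 2(1+2ν)F(a,b)`, and `Φ(t) = n₁ + n₂ + b(t+t₀)²` with
`b = −E₀` and `t₀` chosen so that `Φ'(0) > 0`, the function `Φ` satisfies
`Φ''Φ − (1+ν)(Φ')² ≥ 0`; hence the solution cannot be global (a solution defined for
all `t ≥ 0`, as assumed here, is contradictory). -/
theorem blow_up_negative_energy (ν E₀ b t₀ : ℝ) (hν : 0 < ν)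
    (F f₁ f₂ : ℝ → ℝ → ℝ) (u₁ u₂ : ℝ → ℝ → ℝ)
    (n₁ n₂ p₁ p₂ m₁ m₂ : ℝ → ℝ)
    (hn₁0 : ∀ t ≥ (0:ℝ), 0 ≤ n₁ t) (hn₂0 : ∀ t ≥ (0:ℝ), 0 ≤ n₂ t)
    (hm₁0 : ∀ t ≥ (0:ℝ), 0 ≤ m₁ t) (hm₂0 : ∀ t ≥ (0:ℝ), 0 ≤ m₂ t)
    -- `nᵢ' = 2pᵢ` and `pᵢ' = mᵢ + ⟨Pᵢuᵢ, Pᵢu_{itt}⟩ = mᵢ − ⟨uᵢ, fᵢ(u₁,u₂)⟩`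
    (hn₁ : ∀ t ≥ (0:ℝ), HasDerivAt n₁ (2 * p₁ t) t)
    (hn₂ : ∀ t ≥ (0:ℝ), HasDerivAt n₂ (2 * p₂ t) t)
    (hp₁ : ∀ t ≥ (0:ℝ), HasDerivAt p₁
      (m₁ t - ∫ x : ℝ, u₁ t x * f₁ (u₁ t x) (u₂ t x)) t)
    (hp₂ : ∀ t ≥ (0:ℝ), HasDerivAt p₂
      (m₂ t - ∫ x : ℝ, u₂ t x * f₂ (u₁ t x) (u₂ t x)) t)
    -- Cauchy–Schwarz for the underlying inner products
    (hCS₁ : ∀ t ≥ (0:ℝ), (p₁ t) ^ 2 ≤ n₁ t * m₁ t)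
    (hCS₂ : ∀ t ≥ (0:ℝ), (p₂ t) ^ 2 ≤ n₂ t * m₂ t)
    -- conservation of energy
    (henergy : ∀ t ≥ (0:ℝ),
      m₁ t + m₂ t + 2 * ∫ x : ℝ, F (u₁ t x) (u₂ t x) = E₀)
    -- growth condition on the nonlinearity
    (hgrowth : ∀ a b' : ℝ,
      a * f₁ a b' + b' * f₂ a b' ≤ 2 * (1 + 2 * ν) * F a b')
    (hintF : ∀ t ≥ (0:ℝ), Integrable (fun x : ℝ => F (u₁ t x) (u₂ t x)))
    (hintf : ∀ t ≥ (0:ℝ), Integrable (fun x : ℝ =>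
      u₁ t x * f₁ (u₁ t x) (u₂ t x) + u₂ t x * f₂ (u₁ t x) (u₂ t x)))
    (hintf₁ : ∀ t ≥ (0:ℝ), Integrable (fun x : ℝ => u₁ t x * f₁ (u₁ t x) (u₂ t x)))
    (hintf₂ : ∀ t ≥ (0:ℝ), Integrable (fun x : ℝ => u₂ t x * f₂ (u₁ t x) (u₂ t x)))
    -- negative energy, choice of `b` and of `t₀`
    (hE₀ : E₀ < 0) (hb : b = -E₀) (ht₀ : 0 ≤ t₀)
    (hΦ'0 : 0 < p₁ 0 + p₂ 0 + b * t₀) :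
    (∀ t ≥ (0:ℝ),
      (2 * (m₁ t + m₂ t) -
          2 * (∫ x : ℝ, (u₁ t x * f₁ (u₁ t x) (u₂ t x) +
                u₂ t x * f₂ (u₁ t x) (u₂ t x))) + 2 * b) *
        (n₁ t + n₂ t + b * (t + t₀) ^ 2) -
      (1 + ν) * (2 * (p₁ t + p₂ t + b * (t + t₀))) ^ 2 ≥ 0) ∧
    False :=
  blow_up_negative_energy_general ν E₀ b t₀ hν F f₁ f₂ u₁ u₂ n₁ n₂ p₁ p₂ m₁ m₂ hn₁0 hn₂0 hm₁0 hm₂0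
    hn₁ hn₂ hp₁ hp₂ hCS₁ hCS₂ henergy hgrowth hintF hintf₁ hintf₂ hE₀ hb hΦ'0
end
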